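/- Let G = (V,E) be a finite simple graph, α ∈ ℝ, B ⊆ U ⊆ V, and f : S_V → ℝ an F_B-measurable bounded function. Let G̃ be the disjoint union of two copies V_1, V_2 of G with natural symmetry φ : Ṽ → Ṽ exchanging them, let A = V_1 ∖ U_1 (U_1 being U viewed inside V_1), and for π̃ ∈ S_{Ṽ} let Q_A(π̃) be the minimal subset of Ṽ that contains A, is π̃-invariant, and satisfies φ(Q_A) = Q_A. Then |E_U(f) − E_V(f)| ≤ 2·‖f‖_∞ · P_{Ṽ}( Q_A ∩ B ≠ ∅ | π̃|_A = id ), where B is regarded as a subset of V_1. -/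

import Mathlib

open scoped Classical BigOperators

noncomputable section

namespace SRP

variable {V : Type*} [Fintype V] [DecidableEq V]

/-- A spatial (graph) permutation on the subgraph induced by `U`:
a permutation of `V` fixing the complement of `U` pointwise and moving
every point to itself or to one of its neighbours. -/
def IsGPerm (G : SimpleGraph V) (U : Finset V) (π : Equiv.Perm V) : Prop :=
  (∀ x ∉ U, π x = x) ∧ ∀ x : V, π x = x ∨ G.Adj x (π x)

/-- The energy `H(π) = Σ_x 1{π x ≠ x}`. -/
def en (π : Equiv.Perm V) : ℕ := (Finset.univ.filter fun x => π x ≠ x).card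

/-- The Gibbs weight `exp(-α H(π))`. -/
def wt (α : ℝ) (π : Equiv.Perm V) : ℝ := Real.exp (-α * en π)

/-- The partition function `Z(U)` of the subgraph induced by `U`. -/
def Z (G : SimpleGraph V) (α : ℝ) (U : Finset V) : ℝ :=
  ∑ π : Equiv.Perm V, if IsGPerm G U π then wt α π else 0

/-- Gibbs-weighted sum of `f` over the permutations on `U`. -/
def gsum (G : SimpleGraph V) (α : ℝ) (U : Finset V) (f : Equiv.Perm V → ℝ) : ℝ :=
  ∑ π : Equiv.Perm V, if IsGPerm G U π then wt α π * f π else 0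

/-- The Gibbs expectation `E_U(f)`. -/
def EU (G : SimpleGraph V) (α : ℝ) (U : Finset V) (f : Equiv.Perm V → ℝ) : ℝ :=
  gsum G α U f / Z G α U

/-- The Gibbs probability `P_U(S)`. -/
def PU (G : SimpleGraph V) (α : ℝ) (U : Finset V) (S : Equiv.Perm V → Prop) : ℝ :=
  EU G α U fun π => if S π then 1 else 0

/-- Conditional expectation `E_U(f | ev)` given an event. -/
def condE (G : SimpleGraph V) (α : ℝ) (U : Finset V)
    (f : Equiv.Perm V → ℝ) (ev : Equiv.Perm V → Prop) : ℝ :=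
  gsum G α U (fun π => if ev π then f π else 0) /
    gsum G α U (fun π => if ev π then 1 else 0)

/-- Conditional probability `P_U(S | ev)`. -/
def condP (G : SimpleGraph V) (α : ℝ) (U : Finset V)
    (S ev : Equiv.Perm V → Prop) : ℝ :=
  condE G α U (fun π => if S π then 1 else 0) ev

/-- The orbit `Or_π(A) = {π^j x : x ∈ A, j ∈ ℕ}`. -/
def orb (π : Equiv.Perm V) (A : Finset V) : Finset V :=
  Finset.univ.filter fun y => ∃ x ∈ A, ∃ i : ℕ, (⇑π)^[i] x = y

/-- The vertex set of the cycle of `π` through `z`. -/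
def cyc (π : Equiv.Perm V) (z : V) : Finset V := orb π {z}

/-- The number of edges `‖γ_z‖` of the cycle of `π` through `z`. -/
def cycEdges (π : Equiv.Perm V) (z : V) : ℕ :=
  if π z = z then 0 else (cyc π z).card

/-- `f` is `F_A`-measurable: it only depends on `π x` and `π⁻¹ x` for `x ∈ A`. -/
def MeasOn (A : Finset V) (f : Equiv.Perm V → ℝ) : Prop :=
  ∀ π π' : Equiv.Perm V,
    (∀ x ∈ A, π x = π' x ∧ π.symm x = π'.symm x) → f π = f π'

/-- An event is `F_A`-measurable. -/
def EvMeasOn (A : Finset V) (ev : Equiv.Perm V → Prop) : Prop :=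
  ∀ π π' : Equiv.Perm V,
    (∀ x ∈ A, π x = π' x ∧ π.symm x = π'.symm x) → (ev π ↔ ev π')

end SRP

namespace SRP

variable {V : Type*} [Fintype V] [DecidableEq V]

/-- The disjoint union of two copies of `G`. -/
def twoCopies (G : SimpleGraph V) : SimpleGraph (V ⊕ V) where
  Adj x y := (∃ a b : V, x = Sum.inl a ∧ y = Sum.inl b ∧ G.Adj a b) ∨
             (∃ a b : V, x = Sum.inr a ∧ y = Sum.inr b ∧ G.Adj a b)
  symm := by
    refine ⟨?_⟩
    rintro x y (⟨a, b, rfl, rfl, h⟩ | ⟨a, b, rfl, rfl, h⟩)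
    · exact Or.inl ⟨b, a, rfl, rfl, h.symm⟩
    · exact Or.inr ⟨b, a, rfl, rfl, h.symm⟩
  loopless := by
    refine ⟨?_⟩
    rintro x (⟨a, b, h1, h2, h⟩ | ⟨a, b, h1, h2, h⟩) <;> subst h1 <;>
      · obtain rfl : a = b := by simpa using h2
        exact G.loopless.irrefl a h

/-- The minimal `π`-invariant subset of `V ⊕ V` containing `A` which is
compatible with the natural swap symmetry. -/
def QA (π : Equiv.Perm (V ⊕ V)) (A : Finset (V ⊕ V)) : Finset (V ⊕ V) :=
  Finset.univ.filter fun x =>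
    ∀ S : Finset (V ⊕ V), A ⊆ S → Finset.image (⇑π) S = S →
      Finset.image Sum.swap S = S → x ∈ S

/-! ### Auxiliary development -/

section Aux

lemma image_eq_self_of_maps {α : Type*} [Fintype α] [DecidableEq α] {f : α → α}
    (hf : Function.Injective f) {S : Finset α} (h : ∀ v ∈ S, f v ∈ S) :
    S.image f = S := by
  apply Finset.eq_of_subset_of_card_le
  · intro y hy
    obtain ⟨x, hx, rfl⟩ := Finset.mem_image.1 hy
    exact h x hx
  · rw [Finset.card_image_of_injective _ hf]

lemma mem_iff_of_image_eq {α : Type*} [DecidableEq α] {f : α → α}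
    (hf : Function.Injective f) {S : Finset α} (h : S.image f = S) {x : α} :
    x ∈ S ↔ f x ∈ S := by
  constructor
  · intro hx; rw [← h]; exact Finset.mem_image_of_mem _ hx
  · intro hx
    rw [← h] at hx
    obtain ⟨y, hy, hyx⟩ := Finset.mem_image.1 hx
    rwa [hf hyx] at hy

/-- The minimal subset of `V` containing `Uᶜ` closed under `p` and `q`. -/
def Rset (U : Finset V) (p q : Equiv.Perm V) : Finset V :=
  Finset.univ.filter fun x =>
    ∀ S : Finset V, Uᶜ ⊆ S → S.image ⇑p = S → S.image ⇑q = S → x ∈ S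

lemma mem_Rset {U : Finset V} {p q : Equiv.Perm V} {x : V} :
    x ∈ Rset U p q ↔
      ∀ S : Finset V, Uᶜ ⊆ S → S.image ⇑p = S → S.image ⇑q = S → x ∈ S := by
  simp [Rset]

lemma compl_subset_Rset {U : Finset V} {p q : Equiv.Perm V} : Uᶜ ⊆ Rset U p q :=
  fun x hx => mem_Rset.2 fun _ h1 _ _ => h1 hx

lemma Rset_subset {U : Finset V} {p q : Equiv.Perm V} {S : Finset V}
    (h1 : Uᶜ ⊆ S) (h2 : S.image ⇑p = S) (h3 : S.image ⇑q = S) :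
    Rset U p q ⊆ S := fun _ hx => mem_Rset.1 hx S h1 h2 h3

lemma Rset_image_fst {U : Finset V} {p q : Equiv.Perm V} :
    (Rset U p q).image ⇑p = Rset U p q := by
  apply image_eq_self_of_maps p.injective
  intro x hx
  refine mem_Rset.2 fun S h1 h2 h3 => ?_
  rw [← h2]
  exact Finset.mem_image_of_mem _ (mem_Rset.1 hx S h1 h2 h3)

lemma Rset_image_snd {U : Finset V} {p q : Equiv.Perm V} :
    (Rset U p q).image ⇑q = Rset U p q := by
  apply image_eq_self_of_maps q.injective
  intro x hx
  refine mem_Rset.2 fun S h1 h2 h3 => ?_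
  rw [← h3]
  exact Finset.mem_image_of_mem _ (mem_Rset.1 hx S h1 h2 h3)

lemma mem_Rset_iff_fst {U : Finset V} {p q : Equiv.Perm V} {x : V} :
    x ∈ Rset U p q ↔ p x ∈ Rset U p q :=
  mem_iff_of_image_eq p.injective Rset_image_fst

lemma mem_Rset_iff_snd {U : Finset V} {p q : Equiv.Perm V} {x : V} :
    x ∈ Rset U p q ↔ q x ∈ Rset U p q :=
  mem_iff_of_image_eq q.injective Rset_image_snd

/-- Glue `p` on `R` with `q` off `R`, assuming both preserve `R`. -/
def mix (R : Finset V) (p q : Equiv.Perm V)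
    (hp : ∀ x, x ∈ R ↔ p x ∈ R) (hq : ∀ x, x ∈ R ↔ q x ∈ R) : Equiv.Perm V where
  toFun x := if x ∈ R then p x else q x
  invFun x := if x ∈ R then p.symm x else q.symm x
  left_inv x := by
    by_cases h : x ∈ R
    · simp [h, (hp x).1 h]
    · have h' : q x ∉ R := fun hc => h ((hq x).2 hc)
      simp [h, h']
  right_inv x := by
    by_cases h : x ∈ R
    · have h' : p.symm x ∈ R := (hp _).2 (by simpa using h)
      simp [h, h']
    · have h' : q.symm x ∉ R := fun hc => h (by simpa using (hq _).1 hc)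
      simp [h, h']

lemma mix_apply {R : Finset V} {p q : Equiv.Perm V} {hp hq} (x : V) :
    mix R p q hp hq x = if x ∈ R then p x else q x := rfl

lemma mix_symm_apply {R : Finset V} {p q : Equiv.Perm V} {hp hq} (x : V) :
    (mix R p q hp hq).symm x = if x ∈ R then p.symm x else q.symm x := rfl

/-- First component of the swap involution. -/
def tau1 (U : Finset V) (p q : Equiv.Perm V) : Equiv.Perm V :=
  mix (Rset U p q) p q (fun _ => mem_Rset_iff_fst) (fun _ => mem_Rset_iff_snd)

/-- Second component of the swap involution. -/
def tau2 (U : Finset V) (p q : Equiv.Perm V) : Equiv.Perm V :=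
  mix (Rset U p q) q p (fun _ => mem_Rset_iff_snd) (fun _ => mem_Rset_iff_fst)

lemma tau1_apply {U : Finset V} {p q : Equiv.Perm V} (x : V) :
    tau1 U p q x = if x ∈ Rset U p q then p x else q x := rfl

lemma tau2_apply {U : Finset V} {p q : Equiv.Perm V} (x : V) :
    tau2 U p q x = if x ∈ Rset U p q then q x else p x := rfl

lemma Rset_tau {U : Finset V} (p q : Equiv.Perm V) :
    Rset U (tau1 U p q) (tau2 U p q) = Rset U p q := by
  set R := Rset U p q with hR
  have hsub : Rset U (tau1 U p q) (tau2 U p q) ⊆ R := by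
    apply Rset_subset compl_subset_Rset
    · apply image_eq_self_of_maps (tau1 U p q).injective
      intro x hx
      rw [tau1_apply, if_pos hx]
      exact mem_Rset_iff_fst.1 hx
    · apply image_eq_self_of_maps (tau2 U p q).injective
      intro x hx
      rw [tau2_apply, if_pos hx]
      exact mem_Rset_iff_snd.1 hx
  refine le_antisymm hsub ?_
  apply Rset_subset compl_subset_Rset
  · apply image_eq_self_of_maps p.injective
    intro x hx
    have hx' : x ∈ R := hsub hx
    have : tau1 U p q x = p x := by rw [tau1_apply, if_pos hx']
    rw [← this]
    exact mem_Rset_iff_fst.1 hx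
  · apply image_eq_self_of_maps q.injective
    intro x hx
    have hx' : x ∈ R := hsub hx
    have : tau2 U p q x = q x := by rw [tau2_apply, if_pos hx']
    rw [← this]
    exact mem_Rset_iff_snd.1 hx

lemma tau1_invol {U : Finset V} (p q : Equiv.Perm V) :
    tau1 U (tau1 U p q) (tau2 U p q) = p := by
  ext x
  rw [tau1_apply, Rset_tau]
  by_cases h : x ∈ Rset U p q <;> simp [h, tau1_apply, tau2_apply]

lemma tau2_invol {U : Finset V} (p q : Equiv.Perm V) :
    tau2 U (tau1 U p q) (tau2 U p q) = q := by
  ext x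
  rw [tau2_apply, Rset_tau]
  by_cases h : x ∈ Rset U p q <;> simp [h, tau1_apply, tau2_apply]

lemma en_eq_sum (π : Equiv.Perm V) :
    en π = ∑ x : V, if π x ≠ x then 1 else 0 := Finset.card_filter _ _

lemma en_tau_add {U : Finset V} (p q : Equiv.Perm V) :
    en (tau1 U p q) + en (tau2 U p q) = en p + en q := by
  simp only [en_eq_sum, ← Finset.sum_add_distrib]
  apply Finset.sum_congr rfl
  intro x _
  by_cases h : x ∈ Rset U p q
  · simp [tau1_apply, tau2_apply, h]
  · simp [tau1_apply, tau2_apply, h, add_comm]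

lemma wt_tau_mul {U : Finset V} (α : ℝ) (p q : Equiv.Perm V) :
    wt α (tau1 U p q) * wt α (tau2 U p q) = wt α p * wt α q := by
  simp only [wt, ← Real.exp_add]
  congr 1
  have h := en_tau_add (U := U) p q
  have h' : (en (tau1 U p q) : ℝ) + en (tau2 U p q) = (en p : ℝ) + en q := by
    exact_mod_cast congrArg (fun n : ℕ => (n : ℝ)) h
  ring_nf
  linear_combination (-α) * h'

lemma isGPerm_tau1 {G : SimpleGraph V} {U : Finset V} {p q : Equiv.Perm V}
    (hp : IsGPerm G U p) (hq : IsGPerm G Finset.univ q) :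
    IsGPerm G U (tau1 U p q) := by
  constructor
  · intro x hx
    have hxR : x ∈ Rset U p q := compl_subset_Rset (Finset.mem_compl.2 hx)
    rw [tau1_apply, if_pos hxR]
    exact hp.1 x hx
  · intro x
    rw [tau1_apply]
    by_cases h : x ∈ Rset U p q
    · simpa [h] using hp.2 x
    · simpa [h] using hq.2 x

lemma isGPerm_tau2 {G : SimpleGraph V} {U : Finset V} {p q : Equiv.Perm V}
    (hp : IsGPerm G U p) (hq : IsGPerm G Finset.univ q) :
    IsGPerm G Finset.univ (tau2 U p q) := by
  constructor
  · intro x hx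
    simp at hx
  · intro x
    rw [tau2_apply]
    by_cases h : x ∈ Rset U p q
    · simpa [h] using hq.2 x
    · simpa [h] using hp.2 x

end Aux

section Aux2

lemma twoCopies_fix_or_adj_inl {G : SimpleGraph V} {π : Equiv.Perm (V ⊕ V)}
    (h : IsGPerm (twoCopies G) Finset.univ π) (a : V) :
    ∃ b : V, π (Sum.inl a) = Sum.inl b := by
  rcases h.2 (Sum.inl a) with h' | h'
  · exact ⟨a, h'⟩
  · rcases h' with ⟨c, d, hc, hd, _⟩ | ⟨c, d, hc, hd, _⟩
    · exact ⟨d, hd⟩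
    · simp at hc

lemma twoCopies_fix_or_adj_inr {G : SimpleGraph V} {π : Equiv.Perm (V ⊕ V)}
    (h : IsGPerm (twoCopies G) Finset.univ π) (a : V) :
    ∃ b : V, π (Sum.inr a) = Sum.inr b := by
  rcases h.2 (Sum.inr a) with h' | h'
  · exact ⟨a, h'⟩
  · rcases h' with ⟨c, d, hc, hd, _⟩ | ⟨c, d, hc, hd, _⟩
    · simp at hc
    · exact ⟨d, hd⟩

lemma exists_sumCongr {G : SimpleGraph V} {π : Equiv.Perm (V ⊕ V)}
    (h : IsGPerm (twoCopies G) Finset.univ π) :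
    ∃ p q : Equiv.Perm V, π = Equiv.sumCongr p q := by
  choose pf hpf using twoCopies_fix_or_adj_inl h
  choose qf hqf using twoCopies_fix_or_adj_inr h
  have hpinj : Function.Injective pf := by
    intro a a' haa
    have : π (Sum.inl a) = π (Sum.inl a') := by rw [hpf, hpf, haa]
    simpa using π.injective this
  have hqinj : Function.Injective qf := by
    intro a a' haa
    have : π (Sum.inr a) = π (Sum.inr a') := by rw [hqf, hqf, haa]
    simpa using π.injective this
  refine ⟨Equiv.ofBijective pf (Finite.injective_iff_bijective.1 hpinj),
    Equiv.ofBijective qf (Finite.injective_iff_bijective.1 hqinj), ?_⟩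
  ext x
  cases x with
  | inl a => simpa [Equiv.sumCongr_apply] using hpf a
  | inr a => simpa [Equiv.sumCongr_apply] using hqf a

lemma isGPerm_sumCongr_iff {G : SimpleGraph V} {p q : Equiv.Perm V} :
    IsGPerm (twoCopies G) Finset.univ (Equiv.sumCongr p q) ↔
      IsGPerm G Finset.univ p ∧ IsGPerm G Finset.univ q := by
  constructor
  · intro h
    refine ⟨⟨fun x hx => by simp at hx, fun x => ?_⟩, ⟨fun x hx => by simp at hx, fun x => ?_⟩⟩
    · rcases h.2 (Sum.inl x) with h' | h'
      · left; simpa using h'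
      · rcases h' with ⟨c, d, hc, hd, hadj⟩ | ⟨c, d, hc, hd, _⟩
        · right
          simp only [Equiv.sumCongr_apply, Sum.map_inl, Sum.inl.injEq] at hc hd
          subst hc
          rw [hd]
          exact hadj
        · simp at hc
    · rcases h.2 (Sum.inr x) with h' | h'
      · left; simpa using h'
      · rcases h' with ⟨c, d, hc, hd, _⟩ | ⟨c, d, hc, hd, hadj⟩
        · simp at hc
        · right
          simp only [Equiv.sumCongr_apply, Sum.map_inr, Sum.inr.injEq] at hc hd
          subst hc
          rw [hd]
          exact hadj
  · rintro ⟨hp, hq⟩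
    refine ⟨fun x hx => by simp at hx, fun x => ?_⟩
    cases x with
    | inl a =>
      rcases hp.2 a with h' | h'
      · left; simp [h']
      · right; exact Or.inl ⟨a, p a, rfl, by simp, h'⟩
    | inr a =>
      rcases hq.2 a with h' | h'
      · left; simp [h']
      · right; exact Or.inr ⟨a, q a, rfl, by simp, h'⟩

lemma en_sumCongr (p q : Equiv.Perm V) :
    en (Equiv.sumCongr p q) = en p + en q := by
  simp only [en_eq_sum]
  rw [Fintype.sum_sum_type]
  congr 1 <;> apply Finset.sum_congr rfl <;> intro x _ <;> simp

lemma wt_sumCongr (α : ℝ) (p q : Equiv.Perm V) :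
    wt α (Equiv.sumCongr p q) = wt α p * wt α q := by
  rw [wt, wt, wt, ← Real.exp_add, en_sumCongr]
  congr 1
  push_cast
  ring

lemma sumCongr_inj {p q p' q' : Equiv.Perm V}
    (h : Equiv.sumCongr p q = Equiv.sumCongr p' q') : p = p' ∧ q = q' := by
  constructor
  · ext a
    have := congrArg (fun e : Equiv.Perm (V ⊕ V) => e (Sum.inl a)) h
    simpa using this
  · ext a
    have := congrArg (fun e : Equiv.Perm (V ⊕ V) => e (Sum.inr a)) h
    simpa using this

/-- Transfer sums over permutations of the two-copy graph to sums over pairs. -/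
lemma sum_twoCopies {G : SimpleGraph V} (g : Equiv.Perm (V ⊕ V) → ℝ) :
    (∑ π : Equiv.Perm (V ⊕ V), if IsGPerm (twoCopies G) Finset.univ π then g π else 0)
      = ∑ pq : Equiv.Perm V × Equiv.Perm V,
          if IsGPerm G Finset.univ pq.1 ∧ IsGPerm G Finset.univ pq.2
          then g (Equiv.sumCongr pq.1 pq.2) else 0 := by
  rw [← Finset.sum_filter, ← Finset.sum_filter]
  refine (Finset.sum_bij (fun (pq : Equiv.Perm V × Equiv.Perm V) _ => Equiv.sumCongr pq.1 pq.2) ?_ ?_ ?_ ?_).symm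
  · intro pq hpq
    simp only [Finset.mem_filter, Finset.mem_univ, true_and] at hpq ⊢
    exact isGPerm_sumCongr_iff.2 hpq
  · intro a ha b hb hab
    have := sumCongr_inj hab
    exact Prod.ext this.1 this.2
  · intro π hπ
    simp only [Finset.mem_filter, Finset.mem_univ, true_and] at hπ
    obtain ⟨p, q, rfl⟩ := exists_sumCongr hπ
    exact ⟨(p, q), by simp [Finset.mem_filter, isGPerm_sumCongr_iff.1 hπ], rfl⟩
  · intro pq hpq
    rfl

end Aux2

section Aux3

lemma mem_QA {π : Equiv.Perm (V ⊕ V)} {A : Finset (V ⊕ V)} {x : V ⊕ V} :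
    x ∈ QA π A ↔ ∀ S : Finset (V ⊕ V), A ⊆ S → Finset.image (⇑π) S = S →
      Finset.image Sum.swap S = S → x ∈ S := by
  simp [QA]

lemma swap_injective : Function.Injective (Sum.swap : V ⊕ V → V ⊕ V) :=
  Function.LeftInverse.injective Sum.swap_leftInverse

lemma QA_sumCongr (U : Finset V) (p q : Equiv.Perm V) :
    QA (Equiv.sumCongr p q) (Uᶜ.image Sum.inl) =
      (Rset U p q).image Sum.inl ∪ (Rset U p q).image Sum.inr := by
  set R := Rset U p q with hR
  set T : Finset (V ⊕ V) := R.image Sum.inl ∪ R.image Sum.inr with hT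
  have hA : Uᶜ.image Sum.inl ⊆ T :=
    (Finset.image_subset_image compl_subset_Rset).trans Finset.subset_union_left
  have himg : Finset.image (⇑(Equiv.sumCongr p q)) T = T := by
    rw [hT, Finset.image_union, Finset.image_image, Finset.image_image]
    have h1 : (⇑(Equiv.sumCongr p q)) ∘ Sum.inl = Sum.inl ∘ ⇑p := by
      funext a; simp
    have h2 : (⇑(Equiv.sumCongr p q)) ∘ Sum.inr = Sum.inr ∘ ⇑q := by
      funext a; simp
    rw [h1, h2, ← Finset.image_image, ← Finset.image_image,
      Rset_image_fst, Rset_image_snd]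
  have hswap : Finset.image Sum.swap T = T := by
    rw [hT, Finset.image_union, Finset.image_image, Finset.image_image]
    have h1 : (Sum.swap ∘ Sum.inl : V → V ⊕ V) = Sum.inr := by funext a; simp
    have h2 : (Sum.swap ∘ Sum.inr : V → V ⊕ V) = Sum.inl := by funext a; simp
    rw [h1, h2, Finset.union_comm]
  apply le_antisymm
  · intro x hx
    exact mem_QA.1 hx T hA himg hswap
  · -- reverse inclusion
    intro x hx
    rw [mem_QA]
    intro S hAS himgS hswapS
    -- the trace of S on the first copy
    set S₁ : Finset V := Finset.univ.filter (fun v => Sum.inl v ∈ S) with hS₁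
    have hmemS : ∀ y : V ⊕ V, y ∈ S → Sum.swap y ∈ S := by
      intro y hy
      rw [← hswapS]
      exact Finset.mem_image_of_mem _ hy
    have hmemπ : ∀ y : V ⊕ V, y ∈ S → Equiv.sumCongr p q y ∈ S := by
      intro y hy
      rw [← himgS]
      exact Finset.mem_image_of_mem _ hy
    have hUc : Uᶜ ⊆ S₁ := by
      intro v hv
      rw [hS₁, Finset.mem_filter]
      exact ⟨Finset.mem_univ _, hAS (Finset.mem_image_of_mem _ hv)⟩
    have hclp : S₁.image ⇑p = S₁ := by
      apply image_eq_self_of_maps p.injective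
      intro v hv
      rw [hS₁, Finset.mem_filter] at hv ⊢
      refine ⟨Finset.mem_univ _, ?_⟩
      have := hmemπ _ hv.2
      simpa using this
    have hclq : S₁.image ⇑q = S₁ := by
      apply image_eq_self_of_maps q.injective
      intro v hv
      rw [hS₁, Finset.mem_filter] at hv ⊢
      refine ⟨Finset.mem_univ _, ?_⟩
      have h1 : Sum.inr v ∈ S := by simpa using hmemS _ hv.2
      have h2 : Sum.inr (q v) ∈ S := by simpa using hmemπ _ h1
      simpa using hmemS _ h2
    have hRS : R ⊆ S₁ := Rset_subset hUc hclp hclq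
    have hinl : ∀ v ∈ R, Sum.inl v ∈ S := by
      intro v hv
      have := hRS hv
      rw [hS₁, Finset.mem_filter] at this
      exact this.2
    rcases Finset.mem_union.1 hx with hx | hx
    · obtain ⟨v, hv, rfl⟩ := Finset.mem_image.1 hx
      exact hinl v hv
    · obtain ⟨v, hv, rfl⟩ := Finset.mem_image.1 hx
      simpa using hmemS _ (hinl v hv)

lemma QA_event_iff (U B : Finset V) (p q : Equiv.Perm V) :
    (QA (Equiv.sumCongr p q) (Uᶜ.image Sum.inl) ∩ B.image Sum.inl).Nonempty ↔
      (Rset U p q ∩ B).Nonempty := by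
  rw [QA_sumCongr U p q]
  constructor
  · rintro ⟨x, hx⟩
    rw [Finset.mem_inter] at hx
    obtain ⟨b, hb, rfl⟩ := Finset.mem_image.1 hx.2
    rcases Finset.mem_union.1 hx.1 with h | h
    · obtain ⟨v, hv, hveq⟩ := Finset.mem_image.1 h
      have hvb : v = b := by simpa using hveq
      exact ⟨b, Finset.mem_inter.2 ⟨hvb ▸ hv, hb⟩⟩
    · obtain ⟨v, hv, hveq⟩ := Finset.mem_image.1 h
      simp at hveq
  · rintro ⟨v, hv⟩
    rw [Finset.mem_inter] at hv
    refine ⟨Sum.inl v, Finset.mem_inter.2 ⟨?_, Finset.mem_image_of_mem _ hv.2⟩⟩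
    exact Finset.mem_union_left _ (Finset.mem_image_of_mem _ hv.1)

lemma ev_sumCongr_iff (U : Finset V) (p q : Equiv.Perm V) :
    (∀ x ∈ Uᶜ.image Sum.inl, Equiv.sumCongr p q x = x) ↔ ∀ x ∈ Uᶜ, p x = x := by
  constructor
  · intro h x hx
    have := h (Sum.inl x) (Finset.mem_image_of_mem _ hx)
    simpa using this
  · intro h x hx
    obtain ⟨v, hv, rfl⟩ := Finset.mem_image.1 hx
    simp [h v hv]

end Aux3

section Aux4

lemma isGPerm_subset_iff {G : SimpleGraph V} {U : Finset V} {p : Equiv.Perm V} :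
    IsGPerm G U p ↔ IsGPerm G Finset.univ p ∧ ∀ x ∈ Uᶜ, p x = x := by
  constructor
  · intro h
    exact ⟨⟨fun x hx => absurd (Finset.mem_univ x) hx, h.2⟩,
      fun x hx => h.1 x (Finset.mem_compl.1 hx)⟩
  · rintro ⟨h1, h2⟩
    exact ⟨fun x hx => h2 x (Finset.mem_compl.2 hx), h1.2⟩

lemma Z_pos (G : SimpleGraph V) (α : ℝ) (U : Finset V) : 0 < Z G α U := by
  have h1 : IsGPerm G U 1 := ⟨fun x _ => rfl, fun x => Or.inl rfl⟩
  have hnn : ∀ π : Equiv.Perm V, π ∈ Finset.univ →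
      (0 : ℝ) ≤ if IsGPerm G U π then wt α π else 0 := by
    intro π _
    split
    · exact (Real.exp_pos _).le
    · exact le_refl 0
  calc (0 : ℝ) < wt α 1 := Real.exp_pos _
    _ = if IsGPerm G U 1 then wt α 1 else 0 := by rw [if_pos h1]
    _ ≤ ∑ π : Equiv.Perm V, if IsGPerm G U π then wt α π else 0 :=
        Finset.single_le_sum hnn (Finset.mem_univ 1)
    _ = Z G α U := rfl

lemma pair_sum_mul (P Q : Equiv.Perm V → Prop) (F F' : Equiv.Perm V → ℝ) :
    (∑ p : Equiv.Perm V, if P p then F p else 0) *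
      (∑ q : Equiv.Perm V, if Q q then F' q else 0) =
    ∑ pq : Equiv.Perm V × Equiv.Perm V,
      if P pq.1 ∧ Q pq.2 then F pq.1 * F' pq.2 else 0 := by
  rw [Fintype.sum_mul_sum, Fintype.sum_prod_type]
  apply Finset.sum_congr rfl
  intro p _
  apply Finset.sum_congr rfl
  intro q _
  by_cases hP : P p <;> by_cases hQ : Q q <;> simp [hP, hQ]

/-- The swap-involution cancellation: on the event that the closed set avoids `B`,
the antisymmetrised sum vanishes. -/
lemma cancel_sum (G : SimpleGraph V) (α : ℝ) (B U : Finset V)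
    (f : Equiv.Perm V → ℝ) (hf : MeasOn B f) :
    ∑ pq : Equiv.Perm V × Equiv.Perm V,
      (if (IsGPerm G U pq.1 ∧ IsGPerm G Finset.univ pq.2) ∧
            ¬(Rset U pq.1 pq.2 ∩ B).Nonempty
       then wt α pq.1 * wt α pq.2 * (f pq.1 - f pq.2) else 0) = 0 := by
  set F : Equiv.Perm V × Equiv.Perm V → ℝ := fun pq =>
    if (IsGPerm G U pq.1 ∧ IsGPerm G Finset.univ pq.2) ∧
          ¬(Rset U pq.1 pq.2 ∩ B).Nonempty
    then wt α pq.1 * wt α pq.2 * (f pq.1 - f pq.2) else 0 with hF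
  set T : Equiv.Perm V × Equiv.Perm V → Equiv.Perm V × Equiv.Perm V :=
    fun pq => (tau1 U pq.1 pq.2, tau2 U pq.1 pq.2) with hT
  have hTT : ∀ pq, T (T pq) = pq := by
    intro pq
    rw [hT]
    simp only
    rw [tau1_invol, tau2_invol]
  have hfq : ∀ p q : Equiv.Perm V, ¬(Rset U p q ∩ B).Nonempty →
      f (tau1 U p q) = f q ∧ f (tau2 U p q) = f p := by
    intro p q hE
    have hB : ∀ x ∈ B, x ∉ Rset U p q := fun x hx hc =>
      hE ⟨x, Finset.mem_inter.2 ⟨hc, hx⟩⟩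
    constructor
    · apply hf
      intro x hx
      refine ⟨by rw [tau1_apply, if_neg (hB x hx)], ?_⟩
      show (tau1 U p q).symm x = q.symm x
      rw [tau1, mix_symm_apply, if_neg (hB x hx)]
    · apply hf
      intro x hx
      refine ⟨by rw [tau2_apply, if_neg (hB x hx)], ?_⟩
      show (tau2 U p q).symm x = p.symm x
      rw [tau2, mix_symm_apply, if_neg (hB x hx)]
  have hcondT : ∀ pq : Equiv.Perm V × Equiv.Perm V,
      ((IsGPerm G U pq.1 ∧ IsGPerm G Finset.univ pq.2) ∧
        ¬(Rset U pq.1 pq.2 ∩ B).Nonempty) →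
      ((IsGPerm G U (T pq).1 ∧ IsGPerm G Finset.univ (T pq).2) ∧
        ¬(Rset U (T pq).1 (T pq).2 ∩ B).Nonempty) := by
    rintro pq ⟨⟨h1, h2⟩, h3⟩
    refine ⟨⟨isGPerm_tau1 h1 h2, isGPerm_tau2 h1 h2⟩, ?_⟩
    show ¬(Rset U (tau1 U pq.1 pq.2) (tau2 U pq.1 pq.2) ∩ B).Nonempty
    rw [Rset_tau]
    exact h3
  apply Finset.sum_ninvolution T
  · -- F pq + F (T pq) = 0
    intro pq
    by_cases hc : (IsGPerm G U pq.1 ∧ IsGPerm G Finset.univ pq.2) ∧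
        ¬(Rset U pq.1 pq.2 ∩ B).Nonempty
    · have hcT := hcondT pq hc
      have h1 := hfq pq.1 pq.2 hc.2
      rw [if_pos hc, if_pos hcT]
      show wt α pq.1 * wt α pq.2 * (f pq.1 - f pq.2) +
        wt α (tau1 U pq.1 pq.2) * wt α (tau2 U pq.1 pq.2) *
          (f (tau1 U pq.1 pq.2) - f (tau2 U pq.1 pq.2)) = 0
      rw [wt_tau_mul, h1.1, h1.2]
      ring
    · have hcT : ¬((IsGPerm G U (T pq).1 ∧ IsGPerm G Finset.univ (T pq).2) ∧
          ¬(Rset U (T pq).1 (T pq).2 ∩ B).Nonempty) := by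
        intro h
        have := hcondT (T pq) h
        rw [hTT] at this
        exact hc this
      rw [if_neg hc, if_neg hcT, add_zero]
  · -- F pq ≠ 0 → T pq ≠ pq
    intro pq hne heq
    apply hne
    by_cases hc : (IsGPerm G U pq.1 ∧ IsGPerm G Finset.univ pq.2) ∧
        ¬(Rset U pq.1 pq.2 ∩ B).Nonempty
    · have ht1 : tau1 U pq.1 pq.2 = pq.1 := congrArg Prod.fst heq
      have h1 := (hfq pq.1 pq.2 hc.2).1
      rw [ht1] at h1
      rw [if_pos hc, h1]
      ring
    · rw [if_neg hc]
  · exact fun pq => Finset.mem_univ _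
  · exact hTT

end Aux4

/-- for a finite simple graph `G=(V,E)`, `α ∈ ℝ`, `B ⊆ U ⊆ V` and a
bounded `F_B`-measurable `f` (with `‖f‖_∞ ≤ K`), letting `A = V₁ ∖ U₁` in the
disjoint union of two copies of `G` and `Q_A(π̃)` the minimal `π̃`-invariant,
swap-compatible set containing `A`,
`|E_U(f) − E_V(f)| ≤ 2‖f‖_∞ P_Ṽ(Q_A ∩ B ≠ ∅ | π̃|_A = id)`,
where `B` is regarded as a subset of `V₁`. -/
theorem boundary_decay_bound (G : SimpleGraph V) (α : ℝ)
    (B U : Finset V) (hBU : B ⊆ U)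
    (f : Equiv.Perm V → ℝ) (hf : MeasOn B f) (K : ℝ) (hK : ∀ π, |f π| ≤ K) :
    |EU G α U f - EU G α Finset.univ f| ≤
      2 * K *
        condP (twoCopies G) α Finset.univ
          (fun π => (QA π (Uᶜ.image Sum.inl) ∩ B.image Sum.inl).Nonempty)
          (fun π => ∀ x ∈ Uᶜ.image Sum.inl, π x = x) := by
    classical
  have hZU : 0 < Z G α U := Z_pos G α U
  have hZV : 0 < Z G α Finset.univ := Z_pos G α Finset.univ
  have hK0 : 0 ≤ K := le_trans (abs_nonneg (f 1)) (hK 1)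
  -- transfer gsum over the duplicated graph to sums over pairs
  have key : ∀ g : Equiv.Perm (V ⊕ V) → ℝ,
      gsum (twoCopies G) α Finset.univ g =
        ∑ pq : Equiv.Perm V × Equiv.Perm V,
          if IsGPerm G Finset.univ pq.1 ∧ IsGPerm G Finset.univ pq.2
          then wt α pq.1 * wt α pq.2 * g (Equiv.sumCongr pq.1 pq.2) else 0 := by
    intro g
    rw [gsum, sum_twoCopies (g := fun π => wt α π * g π)]
    apply Finset.sum_congr rfl
    intro pq _
    by_cases h : IsGPerm G Finset.univ pq.1 ∧ IsGPerm G Finset.univ pq.2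
    · rw [if_pos h, if_pos h, wt_sumCongr]
    · rw [if_neg h, if_neg h]
  -- the conditional probability as a ratio of pair sums
  have hcondP : condP (twoCopies G) α Finset.univ
        (fun π => (QA π (Uᶜ.image Sum.inl) ∩ B.image Sum.inl).Nonempty)
        (fun π => ∀ x ∈ Uᶜ.image Sum.inl, π x = x)
      = (∑ pq : Equiv.Perm V × Equiv.Perm V,
          if (IsGPerm G U pq.1 ∧ IsGPerm G Finset.univ pq.2) ∧
              (Rset U pq.1 pq.2 ∩ B).Nonempty
          then wt α pq.1 * wt α pq.2 else 0) / (Z G α U * Z G α Finset.univ) := by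
    simp only [condP, condE]
    congr 1
    · -- numerator
      rw [key]
      apply Finset.sum_congr rfl
      intro pq _
      by_cases h2 : IsGPerm G Finset.univ pq.1 ∧ IsGPerm G Finset.univ pq.2
      · rw [if_pos h2]
        by_cases h3 : ∀ x ∈ Uᶜ, pq.1 x = x
        · rw [if_pos ((ev_sumCongr_iff U pq.1 pq.2).2 h3)]
          have hU1 : IsGPerm G U pq.1 := isGPerm_subset_iff.2 ⟨h2.1, h3⟩
          by_cases h4 : (Rset U pq.1 pq.2 ∩ B).Nonempty
          · rw [if_pos ((QA_event_iff U B pq.1 pq.2).2 h4),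
              if_pos ⟨⟨hU1, h2.2⟩, h4⟩, mul_one]
          · rw [if_neg (fun hc => h4 ((QA_event_iff U B pq.1 pq.2).1 hc)),
              if_neg (fun hc => h4 hc.2), mul_zero]
        · rw [if_neg (fun hc => h3 ((ev_sumCongr_iff U pq.1 pq.2).1 hc)),
            if_neg (fun hc => h3 (isGPerm_subset_iff.1 hc.1.1).2), mul_zero]
      · rw [if_neg h2,
          if_neg (fun hc => h2 ⟨(isGPerm_subset_iff.1 hc.1.1).1, hc.1.2⟩)]
    · -- denominator
      rw [key]
      have hZZ : Z G α U * Z G α Finset.univ =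
          ∑ pq : Equiv.Perm V × Equiv.Perm V,
            if IsGPerm G U pq.1 ∧ IsGPerm G Finset.univ pq.2
            then wt α pq.1 * wt α pq.2 else 0 :=
        pair_sum_mul (IsGPerm G U) (IsGPerm G Finset.univ) (wt α) (wt α)
      rw [hZZ]
      apply Finset.sum_congr rfl
      intro pq _
      by_cases h2 : IsGPerm G Finset.univ pq.1 ∧ IsGPerm G Finset.univ pq.2
      · rw [if_pos h2]
        by_cases h3 : ∀ x ∈ Uᶜ, pq.1 x = x
        · rw [if_pos ((ev_sumCongr_iff U pq.1 pq.2).2 h3),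
            if_pos ⟨isGPerm_subset_iff.2 ⟨h2.1, h3⟩, h2.2⟩, mul_one]
        · rw [if_neg (fun hc => h3 ((ev_sumCongr_iff U pq.1 pq.2).1 hc)),
            if_neg (fun hc => h3 (isGPerm_subset_iff.1 hc.1).2), mul_zero]
      · rw [if_neg h2, if_neg (fun hc => h2 ⟨(isGPerm_subset_iff.1 hc.1).1, hc.2⟩)]
  -- the difference of expectations as a ratio of pair sums
  have hEUdiff : EU G α U f - EU G α Finset.univ f
      = (∑ pq : Equiv.Perm V × Equiv.Perm V,
          if IsGPerm G U pq.1 ∧ IsGPerm G Finset.univ pq.2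
          then wt α pq.1 * wt α pq.2 * (f pq.1 - f pq.2) else 0)
        / (Z G α U * Z G α Finset.univ) := by
    simp only [EU]
    rw [div_sub_div _ _ hZU.ne' hZV.ne']
    congr 1
    have e1 : gsum G α U f * Z G α Finset.univ =
        ∑ pq : Equiv.Perm V × Equiv.Perm V,
          if IsGPerm G U pq.1 ∧ IsGPerm G Finset.univ pq.2
          then (wt α pq.1 * f pq.1) * wt α pq.2 else 0 :=
      pair_sum_mul (IsGPerm G U) (IsGPerm G Finset.univ)
        (fun p => wt α p * f p) (wt α)
    have e2 : Z G α U * gsum G α Finset.univ f =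
        ∑ pq : Equiv.Perm V × Equiv.Perm V,
          if IsGPerm G U pq.1 ∧ IsGPerm G Finset.univ pq.2
          then wt α pq.1 * (wt α pq.2 * f pq.2) else 0 :=
      pair_sum_mul (IsGPerm G U) (IsGPerm G Finset.univ)
        (wt α) (fun q => wt α q * f q)
    rw [e1, e2, ← Finset.sum_sub_distrib]
    apply Finset.sum_congr rfl
    intro pq _
    by_cases h : IsGPerm G U pq.1 ∧ IsGPerm G Finset.univ pq.2
    · rw [if_pos h, if_pos h, if_pos h]; ring
    · rw [if_neg h, if_neg h, if_neg h]; ring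
  -- split the numerator along the event
  have hsplit : (∑ pq : Equiv.Perm V × Equiv.Perm V,
        if IsGPerm G U pq.1 ∧ IsGPerm G Finset.univ pq.2
        then wt α pq.1 * wt α pq.2 * (f pq.1 - f pq.2) else 0)
      = ∑ pq : Equiv.Perm V × Equiv.Perm V,
          if (IsGPerm G U pq.1 ∧ IsGPerm G Finset.univ pq.2) ∧
              (Rset U pq.1 pq.2 ∩ B).Nonempty
          then wt α pq.1 * wt α pq.2 * (f pq.1 - f pq.2) else 0 := by
    have hsum : (∑ pq : Equiv.Perm V × Equiv.Perm V,
        if IsGPerm G U pq.1 ∧ IsGPerm G Finset.univ pq.2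
        then wt α pq.1 * wt α pq.2 * (f pq.1 - f pq.2) else 0)
      = (∑ pq : Equiv.Perm V × Equiv.Perm V,
          if (IsGPerm G U pq.1 ∧ IsGPerm G Finset.univ pq.2) ∧
              (Rset U pq.1 pq.2 ∩ B).Nonempty
          then wt α pq.1 * wt α pq.2 * (f pq.1 - f pq.2) else 0)
        + ∑ pq : Equiv.Perm V × Equiv.Perm V,
          if (IsGPerm G U pq.1 ∧ IsGPerm G Finset.univ pq.2) ∧
              ¬(Rset U pq.1 pq.2 ∩ B).Nonempty
          then wt α pq.1 * wt α pq.2 * (f pq.1 - f pq.2) else 0 := by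
      rw [← Finset.sum_add_distrib]
      apply Finset.sum_congr rfl
      intro pq _
      by_cases h2 : IsGPerm G U pq.1 ∧ IsGPerm G Finset.univ pq.2
      · by_cases h4 : (Rset U pq.1 pq.2 ∩ B).Nonempty
        · rw [if_pos h2, if_pos ⟨h2, h4⟩, if_neg (fun hc => hc.2 h4), add_zero]
        · rw [if_pos h2, if_neg (fun hc => h4 hc.2), if_pos ⟨h2, h4⟩, zero_add]
      · rw [if_neg h2, if_neg (fun hc => h2 hc.1), if_neg (fun hc => h2 hc.1),
          add_zero]
    rw [hsum, cancel_sum G α B U f hf, add_zero]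
  -- the final estimate
  rw [hEUdiff, hsplit, hcondP, abs_div,
    abs_of_pos (mul_pos hZU hZV), ← mul_div_assoc]
  have hwpos : ∀ π : Equiv.Perm V, 0 < wt α π := fun π => Real.exp_pos _
  have hnum : |∑ pq : Equiv.Perm V × Equiv.Perm V,
        if (IsGPerm G U pq.1 ∧ IsGPerm G Finset.univ pq.2) ∧
            (Rset U pq.1 pq.2 ∩ B).Nonempty
        then wt α pq.1 * wt α pq.2 * (f pq.1 - f pq.2) else 0|
      ≤ 2 * K * ∑ pq : Equiv.Perm V × Equiv.Perm V,
          if (IsGPerm G U pq.1 ∧ IsGPerm G Finset.univ pq.2) ∧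
              (Rset U pq.1 pq.2 ∩ B).Nonempty
          then wt α pq.1 * wt α pq.2 else 0 := by
    calc |∑ pq : Equiv.Perm V × Equiv.Perm V,
        if (IsGPerm G U pq.1 ∧ IsGPerm G Finset.univ pq.2) ∧
            (Rset U pq.1 pq.2 ∩ B).Nonempty
        then wt α pq.1 * wt α pq.2 * (f pq.1 - f pq.2) else 0|
        ≤ ∑ pq : Equiv.Perm V × Equiv.Perm V,
          |if (IsGPerm G U pq.1 ∧ IsGPerm G Finset.univ pq.2) ∧
              (Rset U pq.1 pq.2 ∩ B).Nonempty
           then wt α pq.1 * wt α pq.2 * (f pq.1 - f pq.2) else 0| :=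
        Finset.abs_sum_le_sum_abs _ _
      _ ≤ ∑ pq : Equiv.Perm V × Equiv.Perm V,
          (if (IsGPerm G U pq.1 ∧ IsGPerm G Finset.univ pq.2) ∧
              (Rset U pq.1 pq.2 ∩ B).Nonempty
           then wt α pq.1 * wt α pq.2 * (2 * K) else 0) := by
        apply Finset.sum_le_sum
        intro pq _
        by_cases h : (IsGPerm G U pq.1 ∧ IsGPerm G Finset.univ pq.2) ∧
            (Rset U pq.1 pq.2 ∩ B).Nonempty
        · rw [if_pos h, if_pos h, abs_mul,
            abs_of_pos (mul_pos (hwpos pq.1) (hwpos pq.2))]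
          apply mul_le_mul_of_nonneg_left ?_
            (le_of_lt (mul_pos (hwpos pq.1) (hwpos pq.2)))
          have h2K : |f pq.1 - f pq.2| ≤ 2 * K := by
            rw [sub_eq_add_neg, two_mul]
            exact (abs_add_le _ _).trans
              (by rw [abs_neg]; exact add_le_add (hK _) (hK _))
          exact h2K
        · rw [if_neg h, if_neg h, abs_zero]
      _ = 2 * K * ∑ pq : Equiv.Perm V × Equiv.Perm V,
          if (IsGPerm G U pq.1 ∧ IsGPerm G Finset.univ pq.2) ∧
              (Rset U pq.1 pq.2 ∩ B).Nonempty
          then wt α pq.1 * wt α pq.2 else 0 := by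
        rw [Finset.mul_sum]
        apply Finset.sum_congr rfl
        intro pq _
        by_cases h : (IsGPerm G U pq.1 ∧ IsGPerm G Finset.univ pq.2) ∧
            (Rset U pq.1 pq.2 ∩ B).Nonempty
        · rw [if_pos h, if_pos h]; ring
        · rw [if_neg h, if_neg h, mul_zero]
  exact (div_le_div_iff_of_pos_right (mul_pos hZU hZV)).mpr hnum


end SRP
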